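/- Let A be the probability distribution obtained by normalizing G_{δ,ε} (with δ < 1, ε < δ/8). Then χ²(A, N(0,1)) ≤ C·(δ/ε)² for an absolute constant C. -/

import Mathlib

/-!
Let `S = ⋃ₙ [nδ - ε, nδ + ε]`. Since `A` is a constant multiple of the Gaussian density `φ`
restricted to `S`, the ratio `A / φ` is constant on `S`, and `χ²(A, φ) + 1 = 1 / φ(S)`.
The `⌈1/δ⌉` intervals with `0 ≤ n < ⌈1/δ⌉` are disjoint (as `2ε < δ`) and lie in `[-2, 2]`,
where `φ ≥ φ(2)`, so `φ(S) ≥ 2 φ(2) ε / δ`. Hence `χ²(A, φ) ≤ δ / (2 φ(2) ε) ≤ (δ/ε)² / (2 φ(2))`.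
-/

open Real

/-- Standard Gaussian density. -/
noncomputable def stdG (x : ℝ) : ℝ := (Real.sqrt (2 * Real.pi))⁻¹ * Real.exp (-x ^ 2 / 2)

open Classical in
/-- The density of the measure G_{δ,ε}. -/
noncomputable def Gde (δ ε x : ℝ) : ℝ :=
  if ∃ n : ℤ, |x - n * δ| ≤ ε then (δ / (2 * ε)) * stdG x else 0

open MeasureTheory Metric ProbabilityTheory

lemma stdG_eq_gaussianPDFReal : stdG = gaussianPDFReal 0 1 := by
  ext x
  simp [stdG, gaussianPDFReal]

lemma stdG_pos (x : ℝ) : 0 < stdG x :=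
  stdG_eq_gaussianPDFReal ▸ gaussianPDFReal_pos 0 1 x one_ne_zero

lemma integrable_stdG : Integrable stdG :=
  stdG_eq_gaussianPDFReal ▸ integrable_gaussianPDFReal 0 1

lemma stdG_le_stdG_of_abs_le {x y : ℝ} (h : |x| ≤ |y|) : stdG y ≤ stdG x := by
  unfold stdG
  have : x ^ 2 ≤ y ^ 2 := sq_le_sq.mpr h
  gcongr

lemma integral_sq_normalized_indicator_div {α : Type*} [MeasurableSpace α] {μ : Measure α}
    {g : α → ℝ} (hg : ∀ x, g x ≠ 0) {S : Set α} (hS : MeasurableSet S) {c : ℝ} (hc : c ≠ 0) :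
    ∫ x, (S.indicator (fun x ↦ c * g x) x / ∫ y, S.indicator (fun y ↦ c * g y) y ∂μ) ^ 2 / g x ∂μ
      = (∫ x in S, g x ∂μ)⁻¹ := by
  set m := ∫ x in S, g x ∂μ
  have hmass : ∫ y, S.indicator (fun y ↦ c * g y) y ∂μ = c * m := by
    rw [integral_indicator hS, integral_const_mul]
  have hpointwise : ∀ x, (S.indicator (fun x ↦ c * g x) x / (c * m)) ^ 2 / g x
      = S.indicator (fun x ↦ m⁻¹ ^ 2 * g x) x := by
    intro x
    by_cases hx : x ∈ S
    · simp only [Set.indicator_of_mem hx, mul_div_mul_left _ _ hc, div_pow, inv_pow]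
      field_simp [hg x]
    · simp [Set.indicator_of_notMem hx]
  simp_rw [hmass, hpointwise]
  rw [integral_indicator hS, integral_const_mul]
  change m⁻¹ ^ 2 * m = m⁻¹
  rcases eq_or_ne m 0 with hm | hm
  · simp [hm]
  · field_simp

def latticeNbhd (δ ε : ℝ) : Set ℝ := ⋃ n : ℤ, closedBall (n * δ) ε

lemma measurableSet_latticeNbhd (δ ε : ℝ) : MeasurableSet (latticeNbhd δ ε) :=
  .iUnion fun _ ↦ measurableSet_closedBall

lemma Gde_eq_indicator (δ ε : ℝ) :
    Gde δ ε = (latticeNbhd δ ε).indicator (fun x ↦ δ / (2 * ε) * stdG x) := by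
  classical
  ext x
  simp only [Gde, Set.indicator_apply, latticeNbhd, Set.mem_iUnion, mem_closedBall, Real.dist_eq]

lemma volume_real_biUnion_range_closedBall {δ ε : ℝ} (hε : 0 ≤ ε) (hεδ : 2 * ε < δ) (N : ℕ) :
    volume.real (⋃ n ∈ Finset.range N, closedBall (n * δ) ε) = N * (2 * ε) := by
  have hdisj : (Finset.range N : Set ℕ).PairwiseDisjoint fun n : ℕ ↦ closedBall (n * δ) ε := by
    intro m _ n _ hmn
    apply closedBall_disjoint_closedBall
    have hmn' : (1 : ℝ) ≤ |(m : ℝ) - n| := by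
      have : (m : ℤ) - n ≠ 0 := by omega
      exact_mod_cast Int.one_le_abs this
    rw [Real.dist_eq, ← sub_mul, abs_mul, abs_of_pos (by linarith : 0 < δ)]
    nlinarith
  rw [measureReal_biUnion_finset hdisj (fun _ _ ↦ measurableSet_closedBall)
    fun _ _ ↦ measure_closedBall_lt_top.ne]
  simp [Real.volume_real_closedBall hε]

lemma le_setIntegral_stdG_latticeNbhd {δ ε : ℝ} (hδ : δ ≤ 1) (hε : 0 ≤ ε) (hεδ : 2 * ε < δ) :
    2 * stdG 2 * (ε / δ) ≤ ∫ x in latticeNbhd δ ε, stdG x := by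
  have hδ0 : 0 < δ := by linarith
  set N := ⌈δ⁻¹⌉₊
  set T := ⋃ n ∈ Finset.range N, closedBall (n * δ) ε
  have hTS : T ⊆ latticeNbhd δ ε := by
    simp only [T, latticeNbhd, Set.iUnion_subset_iff]
    intro n _
    exact Set.subset_iUnion_of_subset (n : ℤ) (by simp)
  have hT_stdG : ∀ x ∈ T, stdG 2 ≤ stdG x := by
    simp only [T, Set.mem_iUnion, Finset.mem_range, mem_closedBall, Real.dist_eq, abs_le]
    rintro x ⟨n, hn, hxn⟩
    have : (n : ℝ) * δ < 1 := by
      have : (n : ℝ) + 1 ≤ N := by exact_mod_cast hn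
      have : (N : ℝ) < δ⁻¹ + 1 := Nat.ceil_lt_add_one (inv_nonneg.mpr hδ0.le)
      nlinarith [mul_inv_cancel₀ hδ0.ne']
    apply stdG_le_stdG_of_abs_le
    rw [abs_le, abs_of_pos two_pos]
    constructor <;> nlinarith [Nat.cast_nonneg (α := ℝ) n]
  have hTmeas : MeasurableSet T :=
    .biUnion (Finset.range N).countable_toSet fun _ _ ↦ measurableSet_closedBall
  calc 2 * stdG 2 * (ε / δ) = stdG 2 * (δ⁻¹ * (2 * ε)) := by ring
    _ ≤ stdG 2 * ((N : ℝ) * (2 * ε)) := by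
        gcongr
        exacts [(stdG_pos 2).le, Nat.le_ceil δ⁻¹]
    _ = stdG 2 * volume.real T := by rw [volume_real_biUnion_range_closedBall hε hεδ]
    _ ≤ ∫ x in T, stdG x :=
      setIntegral_ge_of_const_le_real hTmeas
        (measure_biUnion_lt_top (Finset.range N).finite_toSet
          fun _ _ ↦ measure_closedBall_lt_top).ne hT_stdG integrable_stdG.integrableOn
    _ ≤ ∫ x in latticeNbhd δ ε, stdG x :=
      setIntegral_mono_set integrable_stdG.integrableOn (.of_forall fun x ↦ (stdG_pos x).le)
        hTS.eventuallyLE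

/-- χ²-divergence of the normalized G_{δ,ε} with respect to N(0,1) is O((δ/ε)²). -/
theorem chi_square_A_bound :
    ∃ C : ℝ, 0 < C ∧ ∀ δ ε : ℝ, 0 < δ → δ < 1 → 0 < ε → ε < δ / 8 →
      (∫ x, (Gde δ ε x / (∫ y, Gde δ ε y)) ^ 2 / stdG x) - 1 ≤ C * (δ / ε) ^ 2 := by
  have hG2 := stdG_pos 2
  refine ⟨(2 * stdG 2)⁻¹, by positivity, fun δ ε hδ hδ1 hε hεδ ↦ ?_⟩
  have hmass := le_setIntegral_stdG_latticeNbhd hδ1.le hε.le (by linarith)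
  have hratio : 1 ≤ δ / ε := (one_le_div hε).mpr (by linarith)
  rw [Gde_eq_indicator, integral_sq_normalized_indicator_div (fun x ↦ (stdG_pos x).ne')
    (measurableSet_latticeNbhd δ ε) (by positivity)]
  calc (∫ x in latticeNbhd δ ε, stdG x)⁻¹ - 1
      ≤ (2 * stdG 2 * (ε / δ))⁻¹ := by
        have : 0 < 2 * stdG 2 * (ε / δ) := by positivity
        linarith [inv_anti₀ this hmass]
    _ = (2 * stdG 2)⁻¹ * (δ / ε) := by rw [mul_inv, inv_div]
    _ ≤ (2 * stdG 2)⁻¹ * (δ / ε) ^ 2 := by gcongr; exact le_self_pow₀ hratio two_ne_zero
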